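/- Let G be a non-archimedean CLI Polish group and let 𝒢 = (G_n), 𝒢' = (G_n') ∈ dgnb(G). Then ω(ρ(𝒢)) = ω(ρ(𝒢')). Consequently there is a unique ordinal β < ω₁, independent of the choice of 𝒢 ∈ dgnb(G), with ω(ρ(𝒢)) = ω·β. -/

import Mathlib

/-!
The tree of `𝒢` on `X(𝒢)` is well-founded because `G` is CLI: along an infinite branch, the
elements `g i` carrying a base point `x₀` into the `i`-th node satisfy `g i * (g j)⁻¹ ∈ G_i` for
`i ≤ j`, so by left invariance `(g i)⁻¹` is Cauchy. The limit `c` of `g i` eventually sends `x₀` to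
`c • x₀`, whose open stabilizer contains some `G_N`, contradicting that deep nodes are
non-singleton orbits. As `X(𝒢)` is countable, the rank is below `ω₁`.

To compare `𝒢` with `𝒢'`, a node `(n, G_n x)` is simulated by `(m, G'_m x')` when `G_n ≤ G'_m`
and `Stab x' ≤ Stab x`; every point of `X(𝒢)` has such an `x'` in `X(𝒢')`. If `G_{ν m} ≤ G'_m`,
climbing `ν (m + 1)` levels in the first tree lets the simulating node climb one level. Hence a
node of rank `ω·δ + b`, for a finite budget `b` depending on `r`, is simulated by a node of rank at
least `ω·δ + r`: only finitely much is lost inside each block of `ω`, so `ρ(𝒢)/ω ≤ ρ(𝒢')/ω`, and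
`ω(a) = ω·(a/ω)`.
-/

noncomputable section

/-- `omegaPart a` is ω(a): the largest limit ordinal `≤ a`, or `0` if there is none. -/
def omegaPart (a : Ordinal) : Ordinal :=
  sSup {b : Ordinal | (b = 0 ∨ (b ≠ 0 ∧ ∀ c < b, Order.succ c < b)) ∧ b ≤ a}

/-- `IsTree lt` says that the binary relation `lt` on `T` is a tree order: it is irreflexive,
transitive, and the set of predecessors of any node is finite and linearly ordered. -/
def IsTree {T : Type*} (lt : T → T → Prop) : Prop :=
  (∀ s, ¬ lt s s) ∧
  (∀ s t u, lt s t → lt t u → lt s u) ∧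
  (∀ s, {t | lt t s}.Finite) ∧
  (∀ s t u, lt t s → lt u s → t = u ∨ lt t u ∨ lt u t)

/-- The length `lh s` of a node of a tree: the number of its strict predecessors. -/
def lh {T : Type*} (lt : T → T → Prop) (s : T) : ℕ :=
  Nat.card {t | lt t s}

/-- The rank `ρ(T)` of a tree `(T, lt)`: for a well-founded tree it is
`sup { ρ_T(s) + 1 : s ∈ T }` where `ρ_T(s) = sup { ρ_T(t) + 1 : s < t }`;
for an ill-founded tree we use the junk value `0`. -/
def rhoRel {T : Type u} (lt : T → T → Prop) : Ordinal.{u} :=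
  letI := Classical.dec (WellFounded (Function.swap lt))
  if h : WellFounded (Function.swap lt) then ⨆ s : T, Order.succ ((h.apply s).rank) else 0

/-- The nodes of the tree `T_ℰ^X` associated to a sequence `E` of (equivalence) relations
on `X`: pairs `(n, C)` where `C` is a non-singleton class `[x]_{E n}`. -/
def TreeNode (X : Type u) (E : ℕ → X → X → Prop) : Type u :=
  {p : ℕ × Set X // ∃ x : X, p.2 = {y | E p.1 x y} ∧ p.2 ≠ {x}}

/-- The tree order on `T_ℰ^X`: `(n, C) < (m, D)` iff `n < m` and `C ⊇ D`. -/
def nodeLT {X : Type u} (E : ℕ → X → X → Prop) :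
    TreeNode X E → TreeNode X E → Prop :=
  fun s t => s.1.1 < t.1.1 ∧ t.1.2 ⊆ s.1.2

/-- The tree `T_ℰ^X` is well-founded: no infinite strictly increasing sequence. -/
def TreeWF (X : Type u) (E : ℕ → X → X → Prop) : Prop :=
  WellFounded (Function.swap (nodeLT E))

/-- The rank `ρ(T_ℰ^X)`. -/
def treeRho (X : Type u) (E : ℕ → X → X → Prop) : Ordinal.{u} :=
  rhoRel (nodeLT E)

/-- A Polish group: a topological group whose topology is Polish. -/
def IsPolishGroup (G : Type u) [Group G] [TopologicalSpace G] : Prop :=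
  IsTopologicalGroup G ∧ PolishSpace G

/-- A topological group is non-archimedean if the open subgroups form a
neighborhood base of the identity. -/
def IsNonArch (G : Type u) [Group G] [TopologicalSpace G] : Prop :=
  ∀ U ∈ nhds (1 : G), ∃ H : Subgroup G, IsOpen (H : Set G) ∧ (H : Set G) ⊆ U

/-- A topological group is CLI if it admits a compatible complete left-invariant metric. -/
def IsCLI (G : Type u) [Group G] [TopologicalSpace G] : Prop :=
  ∃ m : MetricSpace G,
    m.toUniformSpace.toTopologicalSpace = ‹TopologicalSpace G› ∧
    @CompleteSpace G m.toUniformSpace ∧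
    ∀ g h k : G, m.dist (g * h) (g * k) = m.dist h k

/-- A topological group is TSI if it admits a compatible complete two-sided-invariant metric. -/
def IsTSI (G : Type u) [Group G] [TopologicalSpace G] : Prop :=
  ∃ m : MetricSpace G,
    m.toUniformSpace.toTopologicalSpace = ‹TopologicalSpace G› ∧
    @CompleteSpace G m.toUniformSpace ∧
    ∀ g h k : G, m.dist (g * h) (g * k) = m.dist h k ∧ m.dist (h * g) (k * g) = m.dist h k

/-- `Dgnb G` is the set `dgnb(G)`: decreasing sequences `(G_n)` of open subgroups of `G`
with `G_0 = G` forming a neighborhood base of `1_G`. -/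
structure Dgnb (G : Type u) [Group G] [TopologicalSpace G] where
  seq : ℕ → Subgroup G
  isOpen : ∀ n, IsOpen ((seq n : Set G))
  antitone : ∀ n, seq (n + 1) ≤ seq n
  zero_eq_top : seq 0 = ⊤
  basis : ∀ U ∈ nhds (1 : G), ∃ n, ((seq n : Set G)) ⊆ U

/-- The orbit equivalence relation of (the action of) a subgroup `H ≤ G` on a `G`-space `X`:
`x ∼ y` iff `g • x = y` for some `g ∈ H`. -/
def subOrbit {G : Type u} [Group G] (H : Subgroup G) (X : Type v) [MulAction G X] :
    X → X → Prop :=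
  fun x y => ∃ g ∈ H, g • x = y

/-- The tree `T_𝒢^X` of a `𝒢 ∈ dgnb(G)` and a `G`-space `X`: nodes are pairs `(n, C)`
with `C` a non-singleton `G_n`-orbit. We record it by its defining sequence of relations. -/
def dgnbRel {G : Type u} [Group G] [TopologicalSpace G] (𝒢 : Dgnb G) (X : Type v)
    [MulAction G X] : ℕ → X → X → Prop :=
  fun n => subOrbit (𝒢.seq n) X

/-- `ρ^k(𝒢) = ρ(T_𝒢^{G/G_k})`, where `G` acts by left translation on `G/G_k`. -/
def rhoK {G : Type u} [Group G] [TopologicalSpace G] (𝒢 : Dgnb G) (k : ℕ) : Ordinal.{u} :=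
  treeRho (G ⧸ 𝒢.seq k) (dgnbRel 𝒢 (G ⧸ 𝒢.seq k))

/-- `ρ(𝒢) = ρ(T_𝒢^{X(𝒢)})` where `X(𝒢) = ⊔_k G/G_k` is the disjoint union of the coset
spaces, with `G` acting by left translation on each summand. -/
def rhoDgnb {G : Type u} [Group G] [TopologicalSpace G] (𝒢 : Dgnb G) : Ordinal.{u} :=
  treeRho (Σ k : ℕ, G ⧸ 𝒢.seq k)
    (fun n p q => ∃ g ∈ 𝒢.seq n, q = ⟨p.1, g • p.2⟩)

/-- `G` is α-CLI if `ρ(𝒢) ≤ ω·α` for any (equivalently, some) `𝒢 ∈ dgnb(G)`. -/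
def IsAlphaCLI (G : Type u) [Group G] [TopologicalSpace G] (α : Ordinal.{u}) : Prop :=
  ∀ 𝒢 : Dgnb G, rhoDgnb 𝒢 ≤ Ordinal.omega0 * α

/-- `G` is L-α-CLI if `rank(G) ≤ α`, i.e. `ω(ρ(𝒢)) ≤ ω·α` for any (equivalently, some)
`𝒢 ∈ dgnb(G)`. -/
def IsLAlphaCLI (G : Type u) [Group G] [TopologicalSpace G] (α : Ordinal.{u}) : Prop :=
  ∀ 𝒢 : Dgnb G, omegaPart (rhoDgnb 𝒢) ≤ Ordinal.omega0 * α

open Ordinal MulAction Filter Topology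

lemma omegaPart_eq (a : Ordinal) : omegaPart a = ω * (a / ω) := by
  have hdvd : ∀ b : Ordinal, (b = 0 ∨ (b ≠ 0 ∧ ∀ c < b, Order.succ c < b)) ↔ ω ∣ b := by
    intro b
    rw [← isSuccPrelimit_iff_omega0_dvd, Order.isSuccPrelimit_iff_succ_lt]
    refine ⟨?_, fun h => (eq_or_ne b 0).imp_right fun hb => ⟨hb, h⟩⟩
    rintro (rfl | ⟨-, h⟩)
    · exact fun c hc => absurd hc not_lt_zero
    · exact h
  refine IsGreatest.csSup_eq ⟨⟨(hdvd _).2 (dvd_mul_right _ _), mul_div_le a ω⟩, ?_⟩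
  rintro b ⟨hb, hba⟩
  obtain ⟨c, rfl⟩ := (hdvd b).1 hb
  exact mul_le_mul_right ((mul_le_iff_le_div omega0_ne_zero).1 hba) ω

lemma omega0_mul_add_natCast_lt {δ' δ : Ordinal} (h : δ' < δ) (r : ℕ) : ω * δ' + r < ω * δ :=
  calc ω * δ' + r < ω * δ' + ω := add_lt_add_right (natCast_lt_omega0 r) _
    _ = ω * Order.succ δ' := (mul_succ ω δ').symm
    _ ≤ ω * δ := mul_le_mul_right (Order.succ_le_of_lt h) ω

lemma omega0_mul_le_of_forall_add_natCast_le {δ a : Ordinal}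
    (h : ∀ δ' < δ, ∀ r : ℕ, ω * δ' + r ≤ a) : ω * δ ≤ a := by
  refine le_of_forall_lt fun c hc => ?_
  obtain ⟨r, hr⟩ := lt_omega0.1 (mod_lt c omega0_ne_zero)
  calc c = ω * (c / ω) + r := by rw [← hr, div_add_mod]
    _ < ω * (c / ω) + (r + 1 : ℕ) := by gcongr; exact_mod_cast r.lt_succ_self
    _ ≤ a := h _ ((lt_mul_iff_div_lt omega0_ne_zero).1 hc) _

lemma iSup_succ_lt_ord_aleph_one {ι : Type u} [Countable ι] {f : ι → Ordinal.{u}}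
    (hf : ∀ i, f i < (Cardinal.aleph 1).ord) : ⨆ i, Order.succ (f i) < (Cardinal.aleph 1).ord := by
  simp only [Order.succ_eq_add_one]
  refine iSup_add_one_lt_of_lt_cof ?_ hf
  rw [Cardinal.isRegular_aleph_one.cof_ord]
  exact Cardinal.mk_le_aleph0.trans_lt Cardinal.aleph0_lt_aleph_one

namespace TreeNode

variable {X : Type*} {E : ℕ → X → X → Prop}

abbrev level (s : TreeNode X E) : ℕ := s.1.1

abbrev carrier (s : TreeNode X E) : Set X := s.1.2

lemma exists_carrier_eq (s : TreeNode X E) :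
    ∃ x, s.carrier = {y | E s.level x y} ∧ s.carrier ≠ {x} :=
  s.2

lemma nodeLT_iff {s t : TreeNode X E} :
    nodeLT E s t ↔ s.level < t.level ∧ t.carrier ⊆ s.carrier :=
  Iff.rfl

instance [Countable X] : Countable (TreeNode X E) := by
  refine Function.Injective.countable
    (f := fun s : TreeNode X E => (s.level, s.exists_carrier_eq.choose)) fun s t hst => ?_
  obtain ⟨hl, hx⟩ := Prod.mk.inj hst
  refine Subtype.ext (Prod.ext hl ?_)
  change s.carrier = t.carrier
  rw [s.exists_carrier_eq.choose_spec.1, t.exists_carrier_eq.choose_spec.1, ← hx]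
  exact congrArg (fun n => {y | E n s.exists_carrier_eq.choose y}) hl

def rank (wf : TreeWF X E) (s : TreeNode X E) : Ordinal := (wf.apply s).rank

variable (wf : TreeWF X E)

lemma rank_lt_rank {s t : TreeNode X E} (h : nodeLT E s t) : rank wf t < rank wf s :=
  Acc.rank_lt_of_rel (wf.apply s) h

lemma exists_nodeLT_le_rank {s : TreeNode X E} {β : Ordinal} (h : β < rank wf s) :
    ∃ t, nodeLT E s t ∧ β ≤ rank wf t := by
  rw [rank, Acc.rank_eq, Ordinal.lt_iSup_iff] at h
  obtain ⟨⟨t, hst⟩, ht⟩ := h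
  exact ⟨t, hst, Order.lt_succ_iff.1 ht⟩

lemma exists_le_level_le_rank {s : TreeNode X E} {β : Ordinal} {b : ℕ}
    (h : β + b ≤ rank wf s) :
    ∃ t, s.level + b ≤ t.level ∧ t.carrier ⊆ s.carrier ∧ β ≤ rank wf t := by
  induction b generalizing s with
  | zero => exact ⟨s, le_rfl, subset_rfl, by simpa using h⟩
  | succ b ih =>
    have hlt : β + b < rank wf s :=
      (add_lt_add_right (by exact_mod_cast b.lt_succ_self) β).trans_le h
    obtain ⟨u, hsu, hu⟩ := exists_nodeLT_le_rank wf hlt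
    obtain ⟨hlevel_su, hsub_su⟩ := nodeLT_iff.1 hsu
    obtain ⟨t, hlevel, hsub, ht⟩ := ih hu
    exact ⟨t, by omega, hsub.trans hsub_su, ht⟩

lemma treeRho_eq : treeRho X E = ⨆ s, Order.succ (rank wf s) :=
  dif_pos wf

lemma lt_treeRho_iff {β : Ordinal} : β < treeRho X E ↔ ∃ s, β ≤ rank wf s := by
  simp only [treeRho_eq wf, Ordinal.lt_iSup_iff, Order.lt_succ_iff]

lemma treeRho_lt_ord_aleph_one [Countable X] (wf : TreeWF X E) :
    treeRho X E < (Cardinal.aleph 1).ord := by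
  have hrank : ∀ s, rank wf s < (Cardinal.aleph 1).ord := by
    intro s
    induction s using wf.induction with
    | _ s ih =>
      rw [rank, Acc.rank_eq]
      exact iSup_succ_lt_ord_aleph_one fun t => ih t t.2
  rw [treeRho_eq wf]
  exact iSup_succ_lt_ord_aleph_one hrank

end TreeNode

section OrbitTree

variable {G : Type*} [Group G] [TopologicalSpace G] {X : Type*} [MulAction G X] {𝒢 : Dgnb G}

lemma Dgnb.seq_antitone (𝒢 : Dgnb G) : Antitone 𝒢.seq :=
  antitone_nat_of_succ_le 𝒢.antitone

lemma Dgnb.exists_seq_le (𝒢 : Dgnb G) {H : Subgroup G} (hH : IsOpen (H : Set G)) :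
    ∃ n, 𝒢.seq n ≤ H :=
  𝒢.basis _ (hH.mem_nhds H.one_mem)

lemma dgnbRel_refl (n : ℕ) (x : X) : dgnbRel 𝒢 X n x x :=
  ⟨1, one_mem _, one_smul G x⟩

lemma dgnbRel_smul {n : ℕ} {a : G} (ha : a ∈ 𝒢.seq n) (x : X) : dgnbRel 𝒢 X n x (a • x) :=
  ⟨a, ha, rfl⟩

lemma dgnbRel_of_le {n m : ℕ} {x y : X} (h : n ≤ m) (hxy : dgnbRel 𝒢 X m x y) :
    dgnbRel 𝒢 X n x y :=
  let ⟨a, ha, hay⟩ := hxy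
  ⟨a, 𝒢.seq_antitone h ha, hay⟩

lemma setOf_dgnbRel_eq_of_dgnbRel {n : ℕ} {x y : X} (h : dgnbRel 𝒢 X n x y) :
    {z | dgnbRel 𝒢 X n y z} = {z | dgnbRel 𝒢 X n x z} := by
  obtain ⟨a, ha, rfl⟩ := h
  ext z
  constructor
  · rintro ⟨b, hb, rfl⟩
    exact ⟨b * a, mul_mem hb ha, mul_smul b a x⟩
  · rintro ⟨b, hb, rfl⟩
    exact ⟨b * a⁻¹, mul_mem hb (inv_mem ha), by rw [mul_smul, inv_smul_smul]⟩

lemma setOf_dgnbRel_eq_singleton_iff {n : ℕ} {x : X} :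
    {y | dgnbRel 𝒢 X n x y} = {x} ↔ 𝒢.seq n ≤ stabilizer G x := by
  constructor
  · intro h a ha
    have : a • x ∈ ({x} : Set X) := h ▸ dgnbRel_smul ha x
    exact mem_stabilizer_iff.2 this
  · intro h
    ext y
    constructor
    · rintro ⟨a, ha, rfl⟩
      exact mem_stabilizer_iff.1 (h ha)
    · rintro rfl
      exact dgnbRel_refl n y

def Dgnb.orbitNode (𝒢 : Dgnb G) (X : Type*) [MulAction G X] (n : ℕ) (x : X)
    (h : ¬ 𝒢.seq n ≤ stabilizer G x) : TreeNode X (dgnbRel 𝒢 X) :=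
  ⟨(n, {y | dgnbRel 𝒢 X n x y}), x, rfl, mt setOf_dgnbRel_eq_singleton_iff.1 h⟩

namespace TreeNode

variable {s : TreeNode X (dgnbRel 𝒢 X)} {x : X}

lemma carrier_eq_of_mem (hx : x ∈ s.carrier) : s.carrier = {y | dgnbRel 𝒢 X s.level x y} := by
  obtain ⟨x₀, hs, -⟩ := s.exists_carrier_eq
  rw [hs] at hx ⊢
  exact (setOf_dgnbRel_eq_of_dgnbRel hx).symm

lemma exists_mem (s : TreeNode X (dgnbRel 𝒢 X)) : ∃ x, x ∈ s.carrier :=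
  let ⟨x₀, hs, _⟩ := s.exists_carrier_eq
  ⟨x₀, hs ▸ dgnbRel_refl _ x₀⟩

lemma smul_mem_carrier (hx : x ∈ s.carrier) {a : G} (ha : a ∈ 𝒢.seq s.level) :
    a • x ∈ s.carrier := by
  rw [carrier_eq_of_mem hx]
  exact dgnbRel_smul ha x

lemma not_le_stabilizer (hx : x ∈ s.carrier) : ¬ 𝒢.seq s.level ≤ stabilizer G x := by
  obtain ⟨x₀, hs, hne⟩ := s.exists_carrier_eq
  intro hle
  have hsx : s.carrier = {x} :=
    (carrier_eq_of_mem hx).trans (setOf_dgnbRel_eq_singleton_iff.2 hle)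
  have hx₀ : x₀ ∈ s.carrier := hs ▸ dgnbRel_refl _ x₀
  rw [hsx, Set.mem_singleton_iff] at hx₀
  exact hne (hx₀ ▸ hsx)

lemma nodeLT_orbitNode {m : ℕ} (hm : s.level < m) (hx : x ∈ s.carrier)
    (h : ¬ 𝒢.seq m ≤ stabilizer G x) : nodeLT (dgnbRel 𝒢 X) s (𝒢.orbitNode X m x h) := by
  refine nodeLT_iff.2 ⟨hm, ?_⟩
  rw [carrier_eq_of_mem hx]
  exact fun y => dgnbRel_of_le hm.le

end TreeNode

lemma exists_smul_mem_carrier_of_nodeLT {f : ℕ → TreeNode X (dgnbRel 𝒢 X)}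
    (hf : ∀ i, nodeLT _ (f i) (f (i + 1))) :
    ∃ (x₀ : X) (g : ℕ → G), (∀ i, g i • x₀ ∈ (f i).carrier) ∧
      ∀ i, g i * (g (i + 1))⁻¹ ∈ 𝒢.seq (f i).level := by
  obtain ⟨x₀, hx₀⟩ := (f 0).exists_mem
  have step : ∀ i (h : G), h • x₀ ∈ (f i).carrier →
      ∃ a ∈ 𝒢.seq (f i).level, (a * h) • x₀ ∈ (f (i + 1)).carrier := by
    intro i h hh
    obtain ⟨z, hz⟩ := (f (i + 1)).exists_mem
    have hz' := (TreeNode.nodeLT_iff.1 (hf i)).2 hz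
    rw [TreeNode.carrier_eq_of_mem hh] at hz'
    obtain ⟨a, ha, rfl⟩ := hz'
    exact ⟨a, ha, by rwa [mul_smul]⟩
  choose! a ha hmem using step
  let g : ℕ → G := fun i => Nat.rec 1 (fun i h => a i h * h) i
  have hg : ∀ i, g i • x₀ ∈ (f i).carrier := by
    intro i
    induction i with
    | zero => simpa [g] using hx₀
    | succ i ih => exact hmem i (g i) ih
  refine ⟨x₀, g, hg, fun i => ?_⟩
  have : g i * (g (i + 1))⁻¹ = (a i (g i))⁻¹ := by simp [g]
  rw [this]
  exact inv_mem (ha i (g i) (hg i))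

end OrbitTree

section TreeWellFounded

variable {G : Type*} [Group G] [TopologicalSpace G] [IsTopologicalGroup G]

lemma IsCLI.exists_tendsto (hcli : IsCLI G) {g : ℕ → G}
    (hg : ∀ U ∈ 𝓝 (1 : G), ∃ N, ∀ n ≥ N, g N * (g n)⁻¹ ∈ U) : ∃ c, Tendsto g atTop (𝓝 c) := by
  obtain ⟨m, rfl, hcomplete, hinv⟩ := hcli
  let _ : MetricSpace G := m
  have hcauchy : CauchySeq fun n => (g n)⁻¹ := by
    refine Metric.cauchySeq_iff'.2 fun ε hε => ?_
    obtain ⟨N, hN⟩ := hg _ (Metric.ball_mem_nhds 1 hε)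
    refine ⟨N, fun n hn => ?_⟩
    have hdist := hinv (g N) (g n)⁻¹ (g N)⁻¹
    rw [mul_inv_cancel] at hdist
    rw [← hdist]
    exact hN n hn
  obtain ⟨a, ha⟩ := cauchySeq_tendsto_of_complete hcauchy
  exact ⟨a⁻¹, by simpa using ha.inv⟩

variable {X : Type*} [MulAction G X]

theorem treeWF_of_isCLI (hcli : IsCLI G) (𝒢 : Dgnb G)
    (hX : ∀ x : X, IsOpen (stabilizer G x : Set G)) : TreeWF X (dgnbRel 𝒢 X) := by
  refine wellFounded_iff_isEmpty_descending_chain.2 ⟨fun ⟨f, hf⟩ => ?_⟩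
  obtain ⟨x₀, g, hmem, hstep⟩ := exists_smul_mem_carrier_of_nodeLT hf
  have hlevel : ∀ i, i ≤ (f i).level :=
    fun _ => (strictMono_nat_of_lt_succ fun i => (TreeNode.nodeLT_iff.1 (hf i)).1).le_apply
  have hg : ∀ i j, i ≤ j → g i * (g j)⁻¹ ∈ 𝒢.seq i := by
    intro i j hij
    induction j, hij using Nat.le_induction with
    | base => simp [one_mem]
    | succ j hij ih =>
      have := 𝒢.seq_antitone (hij.trans (hlevel j)) (hstep j)
      simpa [mul_assoc] using mul_mem ih this
  obtain ⟨c, hc⟩ := hcli.exists_tendsto fun U hU => by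
    obtain ⟨N, hN⟩ := 𝒢.basis U hU
    exact ⟨N, fun n hn => hN (hg N n hn)⟩
  -- `c • x₀` is fixed by some `𝒢.seq N`, yet it lies in the non-singleton orbits along the branch.
  have hev : ∀ᶠ i in atTop, g i • x₀ = c • x₀ := by
    have hc' := hc.const_mul c⁻¹
    rw [inv_mul_cancel] at hc'
    filter_upwards [hc' ((hX x₀).mem_nhds (one_mem _))] with i hi
    rwa [Set.mem_preimage, SetLike.mem_coe, mem_stabilizer_iff, mul_smul, inv_smul_eq_iff] at hi
  obtain ⟨N, hN⟩ := 𝒢.exists_seq_le (hX (c • x₀))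
  obtain ⟨i, hi, hiN⟩ := (hev.and (eventually_ge_atTop N)).exists
  exact TreeNode.not_le_stabilizer (hi ▸ hmem i)
    ((𝒢.seq_antitone (hiN.trans (hlevel i))).trans hN)

end TreeWellFounded

section Simulation

lemma stabilizer_smul_mono {G X X' : Type*} [Group G] [MulAction G X] [MulAction G X'] {x : X}
    {x' : X'} (h : stabilizer G x' ≤ stabilizer G x) (a : G) :
    stabilizer G (a • x') ≤ stabilizer G (a • x) := by
  rw [stabilizer_smul_eq_stabilizer_map_conj, stabilizer_smul_eq_stabilizer_map_conj]
  exact Subgroup.map_mono h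

variable {G : Type*} [Group G] [TopologicalSpace G] {X X' : Type u} [MulAction G X]
  [MulAction G X'] {𝒢 𝒢' : Dgnb G}

/-- With `𝒢.seq (ν m) ≤ 𝒢'.seq m`, climbing `simulationBudget ν r m` levels in the tree of `𝒢`
lets a simulating node of the tree of `𝒢'` climb `r` levels from level `m`. -/
def simulationBudget (ν : ℕ → ℕ) : ℕ → ℕ → ℕ
  | 0, _ => 0
  | r + 1, m => simulationBudget ν r (m + 1) + ν (m + 1)

def Simulates (s : TreeNode X (dgnbRel 𝒢 X)) (s' : TreeNode X' (dgnbRel 𝒢' X')) : Prop :=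
  𝒢.seq s.level ≤ 𝒢'.seq s'.level ∧
    ∃ x ∈ s.carrier, ∃ x' ∈ s'.carrier, stabilizer G x' ≤ stabilizer G x

lemma Simulates.exists_nodeLT {s t : TreeNode X (dgnbRel 𝒢 X)}
    {s' : TreeNode X' (dgnbRel 𝒢' X')} (hsim : Simulates s s') (hts : t.carrier ⊆ s.carrier)
    (hlt : 𝒢.seq t.level ≤ 𝒢'.seq (s'.level + 1)) :
    ∃ t', nodeLT _ s' t' ∧ t'.level = s'.level + 1 ∧ Simulates t t' := by
  obtain ⟨hle, x, hx, x', hx', hstab⟩ := hsim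
  obtain ⟨y, hy⟩ := t.exists_mem
  have hy' := hts hy
  rw [TreeNode.carrier_eq_of_mem hx] at hy'
  obtain ⟨a, ha, rfl⟩ := hy'
  have hstab' := stabilizer_smul_mono hstab a
  have hne : ¬ 𝒢'.seq (s'.level + 1) ≤ stabilizer G (a • x') :=
    fun h => TreeNode.not_le_stabilizer hy (hlt.trans (h.trans hstab'))
  exact ⟨𝒢'.orbitNode X' _ _ hne,
    TreeNode.nodeLT_orbitNode s'.level.lt_succ_self (TreeNode.smul_mem_carrier hx' (hle ha)) hne,
    rfl, hlt, a • x, hy, a • x', dgnbRel_refl _ _, hstab'⟩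

theorem Simulates.add_le_rank (wf : TreeWF X (dgnbRel 𝒢 X))
    (wf' : TreeWF X' (dgnbRel 𝒢' X')) {ν : ℕ → ℕ} (hν : ∀ m, 𝒢.seq (ν m) ≤ 𝒢'.seq m)
    (δ : Ordinal) (r : ℕ) {s : TreeNode X (dgnbRel 𝒢 X)} {s' : TreeNode X' (dgnbRel 𝒢' X')}
    (hsim : Simulates s s') (hs : ω * δ + simulationBudget ν r s'.level ≤ s.rank wf) :
    ω * δ + r ≤ s'.rank wf' := by
  induction δ using WellFoundedLT.induction generalizing r s s' with
  | _ δ ihδ =>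
  induction r generalizing s s' with
  | zero =>
    simp only [simulationBudget, Nat.cast_zero, add_zero] at hs ⊢
    exact omega0_mul_le_of_forall_add_natCast_le fun δ' hδ' r =>
      ihδ δ' hδ' r hsim ((omega0_mul_add_natCast_lt hδ' _).le.trans hs)
  | succ r ihr =>
    rw [simulationBudget, Nat.cast_add, ← add_assoc] at hs
    obtain ⟨t, hlevel, hts, ht⟩ := TreeNode.exists_le_level_le_rank wf hs
    obtain ⟨t', hst', hlevel', hsim'⟩ :=
      hsim.exists_nodeLT hts ((𝒢.seq_antitone (by omega)).trans (hν _))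
    have ht' := ihr hsim' (hlevel' ▸ ht)
    calc ω * δ + ↑(r + 1) = Order.succ (ω * δ + r) := by
          rw [Nat.cast_succ, ← add_assoc, Order.succ_eq_add_one]
      _ ≤ s'.rank wf' := Order.succ_le_of_lt (ht'.trans_lt (TreeNode.rank_lt_rank wf' hst'))

theorem omega0_mul_le_treeRho (wf : TreeWF X (dgnbRel 𝒢 X)) (wf' : TreeWF X' (dgnbRel 𝒢' X'))
    (hX : ∀ x : X, ∃ x' : X', stabilizer G x' ≤ stabilizer G x) {δ : Ordinal}
    (h : ω * δ ≤ treeRho X (dgnbRel 𝒢 X)) : ω * δ ≤ treeRho X' (dgnbRel 𝒢' X') := by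
  choose ν hν using fun m => 𝒢.exists_seq_le (𝒢'.isOpen m)
  refine omega0_mul_le_of_forall_add_natCast_le fun δ' hδ' r => ?_
  obtain ⟨s, hs⟩ := (TreeNode.lt_treeRho_iff wf).1
    ((omega0_mul_add_natCast_lt hδ' (simulationBudget ν r 0)).trans_le h)
  obtain ⟨x, hx⟩ := s.exists_mem
  obtain ⟨x', hstab⟩ := hX x
  have hle : 𝒢.seq s.level ≤ 𝒢'.seq 0 := 𝒢'.zero_eq_top ▸ le_top
  have hne : ¬ 𝒢'.seq 0 ≤ stabilizer G x' :=
    fun h0 => TreeNode.not_le_stabilizer hx (hle.trans (h0.trans hstab))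
  have hs' := Simulates.add_le_rank wf wf' hν δ' r
    (s' := 𝒢'.orbitNode X' 0 x' hne) ⟨hle, x, hx, x', dgnbRel_refl 0 x', hstab⟩ hs
  exact (hs'.trans_lt ((TreeNode.lt_treeRho_iff wf').2 ⟨_, le_rfl⟩)).le

end Simulation

section CosetSpaces

lemma stabilizer_sigma_mk {G ι : Type*} [Group G] {Y : ι → Type*} [∀ i, MulAction G (Y i)]
    (i : ι) (y : Y i) : stabilizer G (⟨i, y⟩ : Σ i, Y i) = stabilizer G y := by
  ext a
  simp only [mem_stabilizer_iff, Sigma.smul_mk, Sigma.mk.inj_iff, heq_eq_eq, true_and]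

lemma stabilizer_quotient_mk_mono {G : Type*} [Group G] {A B : Subgroup G} (h : A ≤ B)
    (g : G) : stabilizer G (g : G ⧸ A) ≤ stabilizer G (g : G ⧸ B) :=
  fun _ ha => QuotientGroup.eq.2 (h (QuotientGroup.eq.1 ha))

variable {G : Type*} [Group G] [TopologicalSpace G]

lemma rhoDgnb_eq_treeRho (𝒢 : Dgnb G) :
    rhoDgnb 𝒢 = treeRho (Σ k, G ⧸ 𝒢.seq k) (dgnbRel 𝒢 (Σ k, G ⧸ 𝒢.seq k)) := by
  unfold rhoDgnb
  congr 1
  ext n p q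
  exact ⟨fun ⟨g, hg, h⟩ => ⟨g, hg, h.symm⟩, fun ⟨g, hg, h⟩ => ⟨g, hg, h.symm⟩⟩

lemma exists_stabilizer_le_stabilizer (𝒢 𝒢' : Dgnb G) (x : Σ k, G ⧸ 𝒢.seq k) :
    ∃ x' : Σ k, G ⧸ 𝒢'.seq k, stabilizer G x' ≤ stabilizer G x := by
  obtain ⟨k, y⟩ := x
  obtain ⟨g, rfl⟩ := QuotientGroup.mk_surjective y
  obtain ⟨K, hK⟩ := 𝒢'.exists_seq_le (𝒢.isOpen k)
  refine ⟨⟨K, g⟩, ?_⟩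
  rw [stabilizer_sigma_mk, stabilizer_sigma_mk]
  exact stabilizer_quotient_mk_mono hK g

variable [IsTopologicalGroup G]

lemma isOpen_stabilizer_sigma (𝒢 : Dgnb G) (x : Σ k, G ⧸ 𝒢.seq k) :
    IsOpen (stabilizer G x : Set G) := by
  obtain ⟨k, y⟩ := x
  have := QuotientGroup.discreteTopology (𝒢.isOpen k)
  rw [stabilizer_sigma_mk]
  exact stabilizer_isOpen G y

instance [TopologicalSpace.SeparableSpace G] (𝒢 : Dgnb G) (k : ℕ) : Countable (G ⧸ 𝒢.seq k) := by
  have := QuotientGroup.discreteTopology (𝒢.isOpen k)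
  have := (QuotientGroup.isQuotientMap_mk (𝒢.seq k)).separableSpace
  exact TopologicalSpace.separableSpace_iff_countable.1 this

end CosetSpaces

section Rank

variable {G : Type u} [Group G] [TopologicalSpace G] [IsTopologicalGroup G]

lemma treeWF_sigma_of_isCLI (hcli : IsCLI G) (𝒢 : Dgnb G) :
    TreeWF (Σ k, G ⧸ 𝒢.seq k) (dgnbRel 𝒢 (Σ k, G ⧸ 𝒢.seq k)) :=
  treeWF_of_isCLI hcli 𝒢 (isOpen_stabilizer_sigma 𝒢)

lemma omegaPart_rhoDgnb_le (hcli : IsCLI G) (𝒢 𝒢' : Dgnb G) :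
    omegaPart (rhoDgnb 𝒢) ≤ omegaPart (rhoDgnb 𝒢') := by
  rw [omegaPart_eq, omegaPart_eq]
  refine mul_le_mul_right ((mul_le_iff_le_div omega0_ne_zero).1 ?_) ω
  rw [rhoDgnb_eq_treeRho, rhoDgnb_eq_treeRho]
  exact omega0_mul_le_treeRho (treeWF_sigma_of_isCLI hcli 𝒢) (treeWF_sigma_of_isCLI hcli 𝒢')
    (exists_stabilizer_le_stabilizer 𝒢 𝒢') (mul_div_le _ _)

lemma rhoDgnb_lt_ord_aleph_one [TopologicalSpace.SeparableSpace G] (hcli : IsCLI G)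
    (𝒢 : Dgnb G) : rhoDgnb 𝒢 < (Cardinal.aleph 1).ord := by
  rw [rhoDgnb_eq_treeRho]
  exact TreeNode.treeRho_lt_ord_aleph_one (treeWF_sigma_of_isCLI hcli 𝒢)

end Rank

theorem statement_7_general (G : Type) [Group G] [TopologicalSpace G] [IsTopologicalGroup G]
    [PolishSpace G] (hcli : IsCLI G) (𝒢 𝒢' : Dgnb G) :
    omegaPart (rhoDgnb 𝒢) = omegaPart (rhoDgnb 𝒢') ∧
    ∃! β : Ordinal, β < (Cardinal.aleph 1).ord ∧
      ∀ ℋ : Dgnb G, omegaPart (rhoDgnb ℋ) = Ordinal.omega0 * β := by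
  have hinv : ∀ ℋ ℋ' : Dgnb G, omegaPart (rhoDgnb ℋ) = omegaPart (rhoDgnb ℋ') :=
    fun ℋ ℋ' => (omegaPart_rhoDgnb_le hcli ℋ ℋ').antisymm (omegaPart_rhoDgnb_le hcli ℋ' ℋ)
  refine ⟨hinv 𝒢 𝒢', rhoDgnb 𝒢 / ω, ⟨?_, fun ℋ => (hinv ℋ 𝒢).trans (omegaPart_eq _)⟩, ?_⟩
  · exact (div_le_of_le_mul (le_mul_right _ omega0_pos)).trans_lt
      (rhoDgnb_lt_ord_aleph_one hcli 𝒢)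
  · rintro β ⟨-, hβ⟩
    exact mul_left_cancel₀ omega0_ne_zero ((hβ 𝒢).symm.trans (omegaPart_eq _))

theorem statement_7 (G : Type) [Group G] [TopologicalSpace G] [IsTopologicalGroup G]
    [PolishSpace G] (hna : IsNonArch G) (hcli : IsCLI G) (𝒢 𝒢' : Dgnb G) :
    omegaPart (rhoDgnb 𝒢) = omegaPart (rhoDgnb 𝒢') ∧
    ∃! β : Ordinal, β < (Cardinal.aleph 1).ord ∧
      ∀ ℋ : Dgnb G, omegaPart (rhoDgnb ℋ) = Ordinal.omega0 * β :=
  statement_7_general G hcli 𝒢 𝒢'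

end
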